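/- For the PCA on the N-cycle with irreducible local transition matrix T of period d ≥ 2 and cyclic classes C_0,...,C_{d-1}, every configuration not in S := C_0^{⊗N} ∪ ... ∪ C_{d-1}^{⊗N} is transient: starting from such a configuration there is a finite time t_0 ≤ ⌈N/(2n_v)⌉ such that the chain reaches S with positive probability by time t_0, and S is absorbing. -/

import Mathlib

open Matrix Finset MeasureTheory

/-- A row-stochastic matrix: nonnegative entries, each row sums to 1. -/
def RowStochastic {S : Type*} [Fintype S] (T : Matrix S S ℝ) : Prop :=
  (∀ j k, 0 ≤ T j k) ∧ ∀ j, ∑ k, T j k = 1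

/-- Irreducibility of a nonnegative matrix: every state reaches every state. -/
def MatIrreducible {S : Type*} [Fintype S] [DecidableEq S] (T : Matrix S S ℝ) : Prop :=
  ∀ i j, ∃ t : ℕ, 0 < (T ^ t) i j

/-- `d` is the period of state `i`: the gcd of the set of positive return times. -/
def IsGcdPeriod {S : Type*} [Fintype S] [DecidableEq S] (T : Matrix S S ℝ) (i : S) (d : ℕ) : Prop :=
  (∀ m : ℕ, 0 < m → 0 < (T ^ m) i i → d ∣ m) ∧
    ∀ e : ℕ, (∀ m : ℕ, 0 < m → 0 < (T ^ m) i i → e ∣ m) → e ∣ d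

/-- The neighborhood of node `n` on the `N`-cycle: all nodes within cyclic distance `nv`. -/
def nbhd (N nv : ℕ) (n : Fin N) : Finset (Fin N) :=
  Finset.univ.filter fun i => (n.val + N - i.val) % N ≤ nv ∨ (i.val + N - n.val) % N ≤ nv

/-- The PCA global transition matrix on configurations. -/
noncomputable def pcaP (N K nv : ℕ) (T : Matrix (Fin K) (Fin K) ℝ) :
    Matrix (Fin N → Fin K) (Fin N → Fin K) ℝ :=
  Matrix.of fun x y =>
    ∏ n : Fin N, (((nbhd N nv n).card : ℝ)⁻¹ * ∑ i ∈ nbhd N nv n, T (x i) (y n))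

/-- Cyclic class decomposition of `[K]` for `T` with period `d`. -/
def CyclicClasses {K : ℕ} (T : Matrix (Fin K) (Fin K) ℝ) (d : ℕ)
    (C : ℕ → Finset (Fin K)) : Prop :=
  (∀ r, C (r + d) = C r) ∧ (∀ k : Fin K, ∃! r : ℕ, r < d ∧ k ∈ C r) ∧
    ∀ j k, 0 < T j k → ∃ r, j ∈ C r ∧ k ∈ C (r + 1)

/-!
From any configuration, let every node at each step look at a neighbour closer to node `0`
(within distance `n_v`) and move from that neighbour's state to a fixed successor state of
positive `T`-probability. Along this positive-probability path, after `t` steps node `n` carries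
the `t`-th successor of the initial state at the end of its chain of `t` moves towards `0`.
Every node is within cyclic distance `N/2 ≤ t n_v` of `0` once `t = ⌈N/(2n_v)⌉`, so the
configuration is then constant, hence lies in a single cyclic class. On the other hand, a
transition of positive probability out of `C_r^{⊗N}` lands every node in `C_{r+1}`, so `S` is
absorbing.
-/

theorem RowStochastic.exists_pos {S : Type*} [Fintype S] {T : Matrix S S ℝ}
    (hT : RowStochastic T) (j : S) : ∃ k, 0 < T j k := by
  by_contra! h
  have : ∑ k, T j k = 0 := Finset.sum_eq_zero fun k _ => le_antisymm (h k) (hT.1 j k)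
  simp [hT.2 j] at this

section NonnegMatrix

variable {ι : Type*} [Fintype ι] [DecidableEq ι] {P : Matrix ι ι ℝ}

theorem Matrix.pow_apply_pos_of_chain (hP : ∀ x y, 0 ≤ P x y) (z : ℕ → ι)
    (hz : ∀ t, 0 < P (z t) (z (t + 1))) (t : ℕ) : 0 < (P ^ t) (z 0) (z t) := by
  induction t with
  | zero => simp
  | succ t ih =>
    rw [pow_succ, Matrix.mul_apply]
    exact (mul_pos ih (hz t)).trans_le <| Finset.single_le_sum
      (fun w _ => mul_nonneg (pow_apply_nonneg hP t _ w) (hP w _)) (Finset.mem_univ (z t))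

end NonnegMatrix

section Cycle

variable {N : ℕ}

def cycDist (n : Fin N) : ℕ := min n.val (N - n.val)

theorem two_mul_cycDist_le (n : Fin N) : 2 * cycDist n ≤ N := by
  unfold cycDist; omega

def towardZero (nv : ℕ) (hN : 0 < N) (n : Fin N) : Fin N :=
  if h : cycDist n ≤ nv then ⟨0, hN⟩
  else if 2 * n.val ≤ N then ⟨n.val - nv, by omega⟩
  else ⟨n.val + nv, by unfold cycDist at h; omega⟩

variable {nv : ℕ} (hN : 0 < N)

theorem towardZero_mem_nbhd (n : Fin N) : towardZero nv hN n ∈ nbhd N nv n := by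
  have hn := n.isLt
  simp only [nbhd, Finset.mem_filter, Finset.mem_univ, true_and]
  unfold towardZero
  split_ifs with h₁ h₂ <;> unfold cycDist at h₁
  · rcases Nat.le_total n.val (N - n.val) with h | h
    · left; rw [Nat.sub_zero, Nat.add_mod_right, Nat.mod_eq_of_lt hn]; omega
    · right; rw [Nat.zero_add, Nat.mod_eq_of_lt (by omega)]; omega
  · left; rw [show n.val + N - (n.val - nv) = nv + N by omega, Nat.add_mod_right,
      Nat.mod_eq_of_lt (by omega)]
  · right; rw [show n.val + nv + N - n.val = nv + N by omega, Nat.add_mod_right,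
      Nat.mod_eq_of_lt (by omega)]

theorem cycDist_towardZero (n : Fin N) : cycDist (towardZero nv hN n) ≤ cycDist n - nv := by
  have hn := n.isLt
  unfold towardZero
  split_ifs <;> simp only [cycDist] at * <;> omega

theorem towardZero_iterate_eq_zero {t : ℕ} {n : Fin N} (hn : cycDist n ≤ t * nv) :
    (towardZero nv hN)^[t] n = ⟨0, hN⟩ := by
  induction t generalizing n with
  | zero => ext; simp only [Function.iterate_zero, id_eq]; simp only [cycDist] at hn; omega
  | succ t ih =>
    rw [Function.iterate_succ_apply]
    exact ih (by have := cycDist_towardZero (nv := nv) hN n; rw [Nat.succ_mul] at hn; omega)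

end Cycle

section PCA

variable {N K nv : ℕ} {T : Matrix (Fin K) (Fin K) ℝ}

theorem pcaP_apply (x y : Fin N → Fin K) :
    pcaP N K nv T x y =
      ∏ n, (((nbhd N nv n).card : ℝ)⁻¹ * ∑ i ∈ nbhd N nv n, T (x i) (y n)) :=
  rfl

theorem card_nbhd_pos (n : Fin N) : 0 < (nbhd N nv n).card :=
  Finset.card_pos.mpr ⟨n, by simp [nbhd]⟩

theorem pcaP_nonneg (hT : ∀ j k, 0 ≤ T j k) (x y : Fin N → Fin K) :
    0 ≤ pcaP N K nv T x y :=
  pcaP_apply x y ▸ Finset.prod_nonneg fun _ _ =>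
    mul_nonneg (by positivity) (Finset.sum_nonneg fun _ _ => hT _ _)

theorem pcaP_pos (hT : ∀ j k, 0 ≤ T j k) {x y : Fin N → Fin K}
    (h : ∀ n, ∃ i ∈ nbhd N nv n, 0 < T (x i) (y n)) : 0 < pcaP N K nv T x y := by
  rw [pcaP_apply]
  refine Finset.prod_pos fun n _ => mul_pos (by simpa using card_nbhd_pos (nv := nv) n) ?_
  obtain ⟨i, hi, hpos⟩ := h n
  exact hpos.trans_le (Finset.single_le_sum (fun _ _ => hT _ _) hi)

theorem pcaP_eq_zero {x y : Fin N → Fin K} {n : Fin N}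
    (h : ∀ i ∈ nbhd N nv n, T (x i) (y n) = 0) : pcaP N K nv T x y = 0 :=
  pcaP_apply x y ▸ Finset.prod_eq_zero (Finset.mem_univ n) (by simp [Finset.sum_eq_zero h])

theorem sum_pcaP_eq_one (hT : RowStochastic T) (x : Fin N → Fin K) :
    ∑ y, pcaP N K nv T x y = 1 := by
  calc ∑ y, pcaP N K nv T x y
      = ∏ n, ∑ k, ((nbhd N nv n).card : ℝ)⁻¹ * ∑ i ∈ nbhd N nv n, T (x i) k :=
        by rw [Fintype.prod_sum]; rfl
    _ = 1 := Finset.prod_eq_one fun n _ => by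
        rw [← Finset.mul_sum, Finset.sum_comm]
        simp [hT.2, (card_nbhd_pos n).ne']

theorem exists_pow_pcaP_pos_const (hN : 0 < N) (hT : RowStochastic T) {t : ℕ}
    (ht : N ≤ 2 * nv * t) (x : Fin N → Fin K) :
    ∃ k, 0 < (pcaP N K nv T ^ t) x (fun _ => k) := by
  choose succ hsucc using hT.exists_pos
  let z : ℕ → Fin N → Fin K := fun s n => succ^[s] (x ((towardZero nv hN)^[s] n))
  have hstep : ∀ s, 0 < pcaP N K nv T (z s) (z (s + 1)) := fun s =>
    pcaP_pos hT.1 fun n => ⟨_, towardZero_mem_nbhd hN n, by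
      simp only [z]
      rw [Function.iterate_succ_apply' succ, Function.iterate_succ_apply (towardZero nv hN)]
      exact hsucc _⟩
  have hzt : z t = fun _ => succ^[t] (x ⟨0, hN⟩) := by
    funext n
    simp only [z]
    have hnt : 2 * nv * t = 2 * (t * nv) := by ring
    rw [towardZero_iterate_eq_zero hN (by have := two_mul_cycDist_le n; omega)]
  exact ⟨_, hzt ▸ Matrix.pow_apply_pos_of_chain (pcaP_nonneg hT.1) z hstep t⟩

end PCA

section CyclicClasses

variable {K d : ℕ} {T : Matrix (Fin K) (Fin K) ℝ} {C : ℕ → Finset (Fin K)}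

theorem CyclicClasses.mem_add_one_of_pos (hC : CyclicClasses T d C) {j k : Fin K} {r : ℕ}
    (hj : j ∈ C r) (hjk : 0 < T j k) : k ∈ C (r + 1) := by
  obtain ⟨ρ, hjρ, hkρ⟩ := hC.2.2 j k hjk
  obtain ⟨r₀, ⟨hr₀, -⟩, huniq⟩ := hC.2.1 j
  have hper : Function.Periodic C d := hC.1
  have hd : 0 < d := Nat.zero_lt_of_lt hr₀
  have hρr : ρ % d = r % d :=
    (huniq _ ⟨Nat.mod_lt _ hd, by rwa [hper.map_mod_nat]⟩).trans
      (huniq _ ⟨Nat.mod_lt _ hd, by rwa [hper.map_mod_nat]⟩).symm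
  rwa [← hper.map_mod_nat, Nat.add_mod, ← hρr, ← Nat.add_mod, hper.map_mod_nat]

theorem CyclicClasses.mem_add_one_of_pcaP_ne_zero (hC : CyclicClasses T d C)
    (hT : ∀ j k, 0 ≤ T j k) {N nv r : ℕ} {x y : Fin N → Fin K} (hx : ∀ n, x n ∈ C r)
    (hxy : pcaP N K nv T x y ≠ 0) (n : Fin N) : y n ∈ C (r + 1) := by
  by_contra hy
  exact hxy <| pcaP_eq_zero fun i _ =>
    le_antisymm (not_lt.mp fun hpos => hy (hC.mem_add_one_of_pos (hx i) hpos)) (hT _ _)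

end CyclicClasses

theorem Function.Periodic.exists_lt_forall_mem {α ι : Type*} {C : ℕ → Finset α} {d : ℕ}
    (hper : Function.Periodic C d) (hd : 0 < d) {y : ι → α} {s : ℕ}
    (hy : ∀ n, y n ∈ C s) : ∃ r < d, ∀ n, y n ∈ C r :=
  ⟨s % d, Nat.mod_lt _ hd, fun n => hper.map_mod_nat s ▸ hy n⟩

theorem stmt_3_general {K N nv d : ℕ} (hN : 0 < N) (hnv : 0 < nv)
    (T : Matrix (Fin K) (Fin K) ℝ) (hT : RowStochastic T)
    (hd : 2 ≤ d)
    (C : ℕ → Finset (Fin K)) (hC : CyclicClasses T d C) :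
    (∀ x : Fin N → Fin K, (¬ ∃ r, ∀ n, x n ∈ C r) →
      ∃ t₀ ≤ (N + 2 * nv - 1) / (2 * nv),
        0 < ∑ y ∈ Finset.univ.filter (fun y : Fin N → Fin K => ∃ r < d, ∀ n, y n ∈ C r),
              ((pcaP N K nv T) ^ t₀) x y) ∧
    ∀ x : Fin N → Fin K, (∃ r, ∀ n, x n ∈ C r) →
      ∑ y ∈ Finset.univ.filter (fun y : Fin N → Fin K => ∃ r < d, ∀ n, y n ∈ C r),
        pcaP N K nv T x y = 1 := by
  refine ⟨fun x _ => ⟨_, le_rfl, ?_⟩, fun x ⟨r, hx⟩ => ?_⟩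
  · have ht : N ≤ 2 * nv * ((N + 2 * nv - 1) / (2 * nv)) :=
      (ceilDiv_le_iff_le_mul (by positivity)).1 le_rfl
    obtain ⟨k, hk⟩ := exists_pow_pcaP_pos_const hN hT ht x
    obtain ⟨r, ⟨hr, hkr⟩, -⟩ := hC.2.1 k
    exact hk.trans_le <| Finset.single_le_sum
      (fun y _ => pow_apply_nonneg (pcaP_nonneg hT.1) _ x y)
      (Finset.mem_filter.mpr ⟨Finset.mem_univ _, r, hr, fun _ => hkr⟩)
  · rw [Finset.sum_filter_of_ne fun y _ hxy => ?_, sum_pcaP_eq_one hT x]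
    exact Function.Periodic.exists_lt_forall_mem hC.1 (by omega)
      (hC.mem_add_one_of_pcaP_ne_zero hT.1 hx hxy)

/-- For the PCA on the `N`-cycle with irreducible local transition matrix `T`
of period `d ≥ 2` and cyclic classes `C`, every configuration outside
`S = C_0^{⊗N} ∪ … ∪ C_{d-1}^{⊗N}` is transient: from such a configuration the chain reaches
`S` with positive probability within `⌈N/(2 n_v)⌉` steps; moreover `S` is absorbing. -/
theorem stmt_3 {K N nv d : ℕ} (hN : 0 < N) (hnv : 0 < nv)
    (T : Matrix (Fin K) (Fin K) ℝ) (hT : RowStochastic T)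
    (hirr : MatIrreducible T) (hd : 2 ≤ d) (hper : ∀ i, IsGcdPeriod T i d)
    (C : ℕ → Finset (Fin K)) (hC : CyclicClasses T d C) :
    (∀ x : Fin N → Fin K, (¬ ∃ r, ∀ n, x n ∈ C r) →
      ∃ t₀ ≤ (N + 2 * nv - 1) / (2 * nv),
        0 < ∑ y ∈ Finset.univ.filter (fun y : Fin N → Fin K => ∃ r < d, ∀ n, y n ∈ C r),
              ((pcaP N K nv T) ^ t₀) x y) ∧
    ∀ x : Fin N → Fin K, (∃ r, ∀ n, x n ∈ C r) →
      ∑ y ∈ Finset.univ.filter (fun y : Fin N → Fin K => ∃ r < d, ∀ n, y n ∈ C r),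
        pcaP N K nv T x y = 1 :=
  stmt_3_general hN hnv T hT hd C hC
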